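/- Let v and v̄ be multi-unit valuations on m items such that v̄(s̄) − v̄(s) ≥ v(s̄) − v(s) for all quantities s̄ > s in {0,…,m}. Then for every δ > 0, the δ-marginal-rounded valuations satisfy v̄^δ(s̄) − v̄^δ(s) ≥ v^δ(s̄) − v^δ(s) for all s̄ > s in {0,…,m}. Consequently, the set of δ-marginal-rounded valuations of a single-crossing set of multi-unit valuations is itself single-crossing, with the order inherited from the original set. -/
import Mathlib


/-- `x` rounded down to the nearest multiple of `δ`. -/
noncomputable def roundDown (δ x : ℝ) : ℝ := δ * ⌊x / δ⌋

/-- The `δ`-marginal-rounded valuation of a multi-unit valuation `v`. -/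
noncomputable def marginalRound (δ : ℝ) (v : ℕ → ℝ) (s : ℕ) : ℝ :=
  ∑ j ∈ Finset.Icc 1 s, roundDown δ (v j - v (j - 1))

lemma roundDown_mono {δ x y : ℝ} (hδ : 0 < δ) (h : x ≤ y) :
    roundDown δ x ≤ roundDown δ y := by
  unfold roundDown
  have := Int.floor_le_floor (by gcongr : x / δ ≤ y / δ)
  exact mul_le_mul_of_nonneg_left (by exact_mod_cast this) hδ.le

lemma marginalRound_sub {δ : ℝ} {v : ℕ → ℝ} {s t : ℕ} (h : s ≤ t) :
    marginalRound δ v t - marginalRound δ v s =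
      ∑ j ∈ Finset.Ioc s t, roundDown δ (v j - v (j - 1)) := by
  unfold marginalRound
  have h1 : ∀ u : ℕ, Finset.Icc 1 u = Finset.Ioc 0 u := by
    intro u; ext x; simp [Nat.lt_iff_add_one_le]
  rw [h1, h1, ← Finset.sum_Ioc_consecutive _ (Nat.zero_le s) h]
  ring

/-- If `v̄` dominates `v` in the single-crossing sense
(`v̄(s̄) − v̄(s) ≥ v(s̄) − v(s)` for all `s̄ > s`), then the same holds for the
`δ`-marginal-rounded valuations; hence `δ`-marginal rounding preserves the
single-crossing property with the inherited order. -/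
theorem marginal_round_preserves_single_crossing
    (m : ℕ) (v vb : ℕ → ℝ)
    (hv0 : v 0 = 0) (hvmono : ∀ s t : ℕ, s ≤ t → t ≤ m → v s ≤ v t)
    (hvb0 : vb 0 = 0) (hvbmono : ∀ s t : ℕ, s ≤ t → t ≤ m → vb s ≤ vb t)
    (hsc : ∀ s t : ℕ, s < t → t ≤ m → v t - v s ≤ vb t - vb s)
    (δ : ℝ) (hδ : 0 < δ) :
    ∀ s t : ℕ, s < t → t ≤ m →
      marginalRound δ v t - marginalRound δ v s ≤
        marginalRound δ vb t - marginalRound δ vb s := by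
  intro s t hst htm
  rw [marginalRound_sub hst.le, marginalRound_sub hst.le]
  apply Finset.sum_le_sum
  intro j hj
  simp only [Finset.mem_Ioc] at hj
  apply roundDown_mono hδ
  have h1 : 1 ≤ j := Nat.one_le_iff_ne_zero.mpr (by omega)
  have := hsc (j - 1) j (by omega) (le_trans hj.2 htm)
  linarith
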